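/- Let f: M → N be a morphism of A-sets and let f_ℤ: M_ℤ → N_ℤ be its linearization. Then the canonical inclusion (ker f)_ℤ → ker f_ℤ is an isomorphism if and only if f is normal. -/

import Mathlib

universe u

/-- An `A`-set over a commutative monoid with zero `A`: a pointed set with an `A`-action
such that `(ab).m = a.(b.m)`, `a.∗ = ∗`, `0.m = ∗` and `1.m = m`. -/
structure ASet (A : Type u) [CommMonoidWithZero A] : Type (u + 1) where
  carrier : Type u
  pt : carrier
  act : A → carrier → carrier
  act_mul : ∀ a b m, act (a * b) m = act a (act b m)
  act_pt : ∀ a, act a pt = pt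
  zero_act : ∀ m, act 0 m = pt
  one_act : ∀ m, act 1 m = m

variable {A : Type u} [CommMonoidWithZero A]

/-- A morphism of `A`-sets: a basepoint-preserving `A`-equivariant map. -/
structure ASetHom (M N : ASet A) where
  toFun : M.carrier → N.carrier
  map_pt : toFun M.pt = N.pt
  map_act : ∀ a m, toFun (M.act a m) = N.act a (toFun m)

namespace ASetHom

theorem ext {M N : ASet A} {f g : ASetHom M N} (h : ∀ m, f.toFun m = g.toFun m) :
    f = g := by
  cases f; cases g
  simp only [mk.injEq]
  exact funext h

/-- The identity morphism of `A`-sets. -/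
def id (M : ASet A) : ASetHom M M := ⟨fun m => m, rfl, fun _ _ => rfl⟩

/-- Composition of morphisms of `A`-sets. -/
def comp {M N P : ASet A} (g : ASetHom N P) (f : ASetHom M N) : ASetHom M P :=
  ⟨fun m => g.toFun (f.toFun m), by (try simp only []); rw [f.map_pt, g.map_pt],
    fun a m => by
      try simp only []
      rw [f.map_act, g.map_act]⟩

/-- Monomorphism in the category of `A`-sets. -/
def IsMono {M N : ASet A} (f : ASetHom M N) : Prop :=
  ∀ (P : ASet A) (g h : ASetHom P M), f.comp g = f.comp h → g = h

/-- Epimorphism in the category of `A`-sets. -/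
def IsEpi {M N : ASet A} (f : ASetHom M N) : Prop :=
  ∀ (P : ASet A) (g h : ASetHom N P), g.comp f = h.comp f → g = h

/-- Isomorphism in the category of `A`-sets. -/
def IsIso {M N : ASet A} (f : ASetHom M N) : Prop :=
  ∃ g : ASetHom N M, g.comp f = id M ∧ f.comp g = id N

/-- A morphism of `A`-sets is normal if each fibre over a non-basepoint element
contains at most one element. -/
def IsNormal {M N : ASet A} (f : ASetHom M N) : Prop :=
  ∀ m m', f.toFun m = f.toFun m' → f.toFun m ≠ N.pt → m = m'

/-- The kernel of a morphism of `A`-sets: the preimage of the basepoint. -/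
def kerSet {M N : ASet A} (f : ASetHom M N) : Set M.carrier :=
  {m | f.toFun m = N.pt}

end ASetHom

namespace ASet

/-- The sub-`A`-set determined by a subset stable under the action and containing the
basepoint. -/
def sub (M : ASet A) (S : Set M.carrier) (hpt : M.pt ∈ S)
    (hact : ∀ a : A, ∀ m ∈ S, M.act a m ∈ S) : ASet A where
  carrier := ↥S
  pt := ⟨M.pt, hpt⟩
  act a m := ⟨M.act a m.1, hact a m.1 m.2⟩
  act_mul a b m := Subtype.ext (M.act_mul a b m.1)
  act_pt a := Subtype.ext (M.act_pt a)
  zero_act m := Subtype.ext (M.zero_act m.1)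
  one_act m := Subtype.ext (M.one_act m.1)

/-- The relation collapsing the subset `S` to a point. -/
def quotRel (M : ASet A) (S : Set M.carrier) : M.carrier → M.carrier → Prop :=
  fun m m' => m = m' ∨ (m ∈ S ∧ m' ∈ S)

/-- The quotient `A`-set `M/S` collapsing an action-stable subset `S` to the basepoint. -/
def quot (M : ASet A) (S : Set M.carrier)
    (hact : ∀ a : A, ∀ m ∈ S, M.act a m ∈ S) : ASet A where
  carrier := Quot (M.quotRel S)
  pt := Quot.mk _ M.pt
  act a := Quot.lift (fun m => Quot.mk _ (M.act a m)) (by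
    rintro m m' (rfl | ⟨h1, h2⟩)
    · rfl
    · exact Quot.sound (Or.inr ⟨hact a m h1, hact a m' h2⟩))
  act_mul a b q := Quot.inductionOn q fun m => by
    show Quot.mk _ (M.act (a * b) m) = Quot.mk _ (M.act a (M.act b m))
    rw [M.act_mul]
  act_pt a := by
    show Quot.mk _ (M.act a M.pt) = Quot.mk _ M.pt
    rw [M.act_pt]
  zero_act q := Quot.inductionOn q fun m => by
    show Quot.mk _ (M.act 0 m) = Quot.mk _ M.pt
    rw [M.zero_act]
  one_act q := Quot.inductionOn q fun m => by
    show Quot.mk _ (M.act 1 m) = Quot.mk _ m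
    rw [M.one_act]

end ASet

namespace ASetHom

theorem kerSet_stable {M N : ASet A} (f : ASetHom M N) :
    ∀ a : A, ∀ m ∈ f.kerSet, M.act a m ∈ f.kerSet := by
  intro a m hm
  show f.toFun (M.act a m) = N.pt
  rw [f.map_act, hm, N.act_pt]

/-- The image of a morphism of `A`-sets, as an `A`-set. -/
def imageASet {M N : ASet A} (f : ASetHom M N) : ASet A :=
  N.sub (Set.range f.toFun) ⟨M.pt, f.map_pt⟩
    (fun a n hn => by
      obtain ⟨m, rfl⟩ := hn
      exact ⟨M.act a m, f.map_act a m⟩)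

/-- The coimage `M/ker f` of a morphism of `A`-sets. -/
def coimage {M N : ASet A} (f : ASetHom M N) : ASet A :=
  M.quot f.kerSet f.kerSet_stable

/-- The canonical morphism `M/ker f → im f`. -/
def canonical {M N : ASet A} (f : ASetHom M N) : ASetHom f.coimage f.imageASet where
  toFun := Quot.lift (fun m => (⟨f.toFun m, ⟨m, rfl⟩⟩ : ↥(Set.range f.toFun))) (by
    rintro m m' (rfl | ⟨h1, h2⟩)
    · rfl
    · exact Subtype.ext (h1.trans h2.symm))
  map_pt := Subtype.ext f.map_pt
  map_act a q := Quot.inductionOn q fun m => Subtype.ext (f.map_act a m)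

end ASetHom

namespace ASet

attribute [local instance] Classical.propDecidable

/-- `A` as an `A`-set over itself (basepoint `0`). -/
def ofSelf (A : Type u) [CommMonoidWithZero A] : ASet A :=
  ⟨A, 0, (· * ·), mul_assoc, mul_zero, zero_mul, one_mul⟩

/-- The `A`-set `eA` for an element `e` of `A`. -/
def idem (A : Type u) [CommMonoidWithZero A] (e : A) : ASet A :=
  (ofSelf A).sub {x | ∃ a : A, x = e * a} ⟨0, (mul_zero e).symm⟩
    (fun a m hm => by
      obtain ⟨b, rfl⟩ := hm
      exact ⟨a * b, mul_left_comm a e b⟩)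

/-- Underlying carrier of the wedge of a family of `A`-sets. -/
def WedgeCarrier {ι : Type u} (Ms : ι → ASet A) : Type u :=
  Option ((i : ι) × {m : (Ms i).carrier // m ≠ (Ms i).pt})

/-- Action on the wedge carrier. -/
noncomputable def wedgeAct {ι : Type u} (Ms : ι → ASet A) (a : A)
    (x : WedgeCarrier Ms) : WedgeCarrier Ms :=
  x.bind fun p =>
    if h : (Ms p.1).act a p.2.1 = (Ms p.1).pt then none else some ⟨p.1, ⟨_, h⟩⟩

theorem wedgeAct_mul {ι : Type u} (Ms : ι → ASet A) (a b : A) (x : WedgeCarrier Ms) :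
    wedgeAct Ms (a * b) x = wedgeAct Ms a (wedgeAct Ms b x) := by
  cases x with
  | none => rfl
  | some p =>
    obtain ⟨i, m, hm⟩ := p
    simp only [wedgeAct, Option.bind]
    by_cases h1 : (Ms i).act b m = (Ms i).pt
    · rw [dif_pos h1, dif_pos (by rw [(Ms i).act_mul, h1, (Ms i).act_pt])]
    · rw [dif_neg h1]
      simp only [Option.bind]
      by_cases h2 : (Ms i).act a ((Ms i).act b m) = (Ms i).pt
      · rw [dif_pos (by rw [(Ms i).act_mul]; exact h2), dif_pos h2]
      · rw [dif_neg (by rw [(Ms i).act_mul]; exact h2), dif_neg h2]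
        simp only [(Ms i).act_mul]
        all_goals rfl

/-- The wedge (coproduct) of a family of `A`-sets. -/
noncomputable def wedge {ι : Type u} (Ms : ι → ASet A) : ASet A where
  carrier := WedgeCarrier Ms
  pt := none
  act := wedgeAct Ms
  act_mul := wedgeAct_mul Ms
  act_pt _ := rfl
  zero_act x := by
    cases x with
    | none => rfl
    | some p =>
      simp only [wedgeAct, Option.bind]
      rw [dif_pos ((Ms p.1).zero_act p.2.1)]
  one_act x := by
    cases x with
    | none => rfl
    | some p =>
      obtain ⟨i, m, hm⟩ := p
      simp only [wedgeAct, Option.bind]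
      rw [dif_neg (by rw [(Ms i).one_act]; exact hm)]
      simp only [(Ms i).one_act]
      all_goals rfl

/-- `A`-sets `M` and `N` are isomorphic. -/
def Iso (M N : ASet A) : Prop := ∃ f : ASetHom M N, f.IsIso

/-- The free `A`-set on a (index) type `S`, i.e. `⋁_{s ∈ S} A·s`. -/
noncomputable def free (A : Type u) [CommMonoidWithZero A] (S : Type u) : ASet A :=
  wedge (fun _ : S => ofSelf A)

/-- A projective `A`-set: morphisms out of it lift along every epimorphism. -/
def IsProjective (P : ASet A) : Prop :=
  ∀ (M N : ASet A) (e : ASetHom M N), e.IsEpi →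
    ∀ f : ASetHom P N, ∃ g : ASetHom P M, e.comp g = f

end ASet

namespace ASet

attribute [local instance] Classical.propDecidable

/-- The binary wedge `M ∨ N` of two `A`-sets. -/
noncomputable def wedge2 (M N : ASet A) : ASet A where
  carrier := Option ({m : M.carrier // m ≠ M.pt} ⊕ {n : N.carrier // n ≠ N.pt})
  pt := none
  act a x := x.bind (Sum.elim
    (fun m => if h : M.act a m.1 = M.pt then none else some (.inl ⟨_, h⟩))
    (fun n => if h : N.act a n.1 = N.pt then none else some (.inr ⟨_, h⟩)))
  act_mul a b x := by
    cases x with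
    | none => rfl
    | some p =>
      cases p with
      | inl m =>
        simp only [Option.bind, Sum.elim_inl]
        by_cases h1 : M.act b m.1 = M.pt
        · rw [dif_pos h1, dif_pos (by rw [M.act_mul, h1, M.act_pt])]
        · rw [dif_neg h1]
          simp only [Option.bind, Sum.elim_inl]
          by_cases h2 : M.act a (M.act b m.1) = M.pt
          · rw [dif_pos (by rw [M.act_mul]; exact h2), dif_pos h2]
          · rw [dif_neg (by rw [M.act_mul]; exact h2), dif_neg h2]
            simp only [M.act_mul]
      | inr n =>
        simp only [Option.bind, Sum.elim_inr]
        by_cases h1 : N.act b n.1 = N.pt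
        · rw [dif_pos h1, dif_pos (by rw [N.act_mul, h1, N.act_pt])]
        · rw [dif_neg h1]
          simp only [Option.bind, Sum.elim_inr]
          by_cases h2 : N.act a (N.act b n.1) = N.pt
          · rw [dif_pos (by rw [N.act_mul]; exact h2), dif_pos h2]
          · rw [dif_neg (by rw [N.act_mul]; exact h2), dif_neg h2]
            simp only [N.act_mul]
  act_pt _ := rfl
  zero_act x := by
    cases x with
    | none => rfl
    | some p =>
      cases p with
      | inl m => simp only [Option.bind, Sum.elim_inl]; rw [dif_pos (M.zero_act m.1)]
      | inr n => simp only [Option.bind, Sum.elim_inr]; rw [dif_pos (N.zero_act n.1)]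
  one_act x := by
    cases x with
    | none => rfl
    | some p =>
      cases p with
      | inl m =>
        simp only [Option.bind, Sum.elim_inl]
        rw [dif_neg (by rw [M.one_act]; exact m.2)]
        simp only [M.one_act]
      | inr n =>
        simp only [Option.bind, Sum.elim_inr]
        rw [dif_neg (by rw [N.one_act]; exact n.2)]
        simp only [N.one_act]

/-- The canonical inclusion `M → M ∨ N`. -/
noncomputable def wedge2.inl (M N : ASet A) : ASetHom M (wedge2 M N) where
  toFun m := if h : m = M.pt then none else some (.inl ⟨m, h⟩)
  map_pt := dif_pos rfl
  map_act a m := by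
    show (if h : M.act a m = M.pt then
        (none : Option ({m : M.carrier // m ≠ M.pt} ⊕ {n : N.carrier // n ≠ N.pt}))
        else some (.inl ⟨M.act a m, h⟩)) = (wedge2 M N).act a
      ((if h : m = M.pt then none else some (.inl ⟨m, h⟩) :
        Option ({m : M.carrier // m ≠ M.pt} ⊕ {n : N.carrier // n ≠ N.pt})))
    by_cases h : m = M.pt
    · subst h
      rw [dif_pos (M.act_pt a), dif_pos rfl]
      rfl
    · rw [dif_neg h]
      dsimp only [wedge2, Option.bind, Sum.elim_inl]

/-- The canonical projection `M ∨ N → N`. -/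
noncomputable def wedge2.snd (M N : ASet A) : ASetHom (wedge2 M N) N where
  toFun x := x.elim N.pt (Sum.elim (fun _ => N.pt) (fun n => n.1))
  map_pt := rfl
  map_act a x := by
    try simp only []
    cases x with
    | none => exact (N.act_pt a).symm
    | some p =>
      cases p with
      | inl m =>
        dsimp only [wedge2, Option.bind, Sum.elim_inl]
        by_cases h : M.act a m.1 = M.pt
        · rw [dif_pos h]
          exact (N.act_pt a).symm
        · rw [dif_neg h]
          exact (N.act_pt a).symm
      | inr n =>
        dsimp only [wedge2, Option.bind, Sum.elim_inr]
        by_cases h : N.act a n.1 = N.pt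
        · rw [dif_pos h]
          exact h.symm
        · rw [dif_neg h]
          rfl

end ASet

namespace ASet

/-- The localization relation on `S × M`: `(s,m) ∼ (s',m')` iff `ts.m' = ts'.m` for
some `t ∈ S`. -/
def locRel (S : Submonoid A) (M : ASet A) :
    (S × M.carrier) → (S × M.carrier) → Prop :=
  fun p q => ∃ t : S, M.act (↑t * ↑p.1) q.2 = M.act (↑t * ↑q.1) p.2

/-- The localization `S⁻¹M` of an `A`-set at a multiplicative subset `S`, with the
`A`-action `a.(m/s) = (a.m)/s`. -/
def loc (S : Submonoid A) (M : ASet A) : ASet A where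
  carrier := Quot (locRel S M)
  pt := Quot.mk _ (1, M.pt)
  act a := Quot.lift (fun p => Quot.mk _ (p.1, M.act a p.2)) (by
    rintro ⟨s, m⟩ ⟨s', m'⟩ ⟨t, ht⟩
    dsimp only at ht
    refine Quot.sound ⟨t, ?_⟩
    dsimp only
    rw [← M.act_mul, mul_comm _ a, M.act_mul, ht, ← M.act_mul, mul_comm a, M.act_mul])
  act_mul a b q := Quot.inductionOn q fun p => by
    show Quot.mk _ (p.1, M.act (a * b) p.2) = Quot.mk _ (p.1, M.act a (M.act b p.2))
    rw [M.act_mul]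
  act_pt a := by
    show Quot.mk _ ((1 : S), M.act a M.pt) = Quot.mk _ ((1 : S), M.pt)
    rw [M.act_pt]
  zero_act q := Quot.inductionOn q fun p => by
    show Quot.mk _ (p.1, M.act 0 p.2) = Quot.mk _ ((1 : S), M.pt)
    rw [M.zero_act]
    exact Quot.sound ⟨1, by simp only [M.act_pt]⟩
  one_act q := Quot.inductionOn q fun p => by
    show Quot.mk _ (p.1, M.act 1 p.2) = Quot.mk _ p
    rw [M.one_act]

end ASet

namespace ASetHom

/-- The localization `S⁻¹f` of a morphism of `A`-sets. -/
def locMap (S : Submonoid A) {M N : ASet A} (f : ASetHom M N) :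
    ASetHom (ASet.loc S M) (ASet.loc S N) where
  toFun := Quot.lift (fun p => Quot.mk _ (p.1, f.toFun p.2)) (by
    rintro ⟨s, m⟩ ⟨s', m'⟩ ⟨t, ht⟩
    dsimp only at ht
    refine Quot.sound ⟨t, ?_⟩
    dsimp only
    rw [← f.map_act, ← f.map_act, ht])
  map_pt := by
    show Quot.mk _ ((1 : S), f.toFun M.pt) = Quot.mk _ ((1 : S), N.pt)
    rw [f.map_pt]
  map_act a q := Quot.inductionOn q fun p => by
    show Quot.mk _ (p.1, f.toFun (M.act a p.2)) = Quot.mk _ (p.1, N.act a (f.toFun p.2))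
    rw [f.map_act]

end ASetHom

namespace ASet

/-- The generating relation for the tensor product of two `A`-sets:
`(a.m, n) ∼ (m, a.n)`. -/
def tensorRel (M N : ASet A) :
    (M.carrier × N.carrier) → (M.carrier × N.carrier) → Prop :=
  fun p q => ∃ (a : A) (m : M.carrier) (n : N.carrier),
    p = (M.act a m, n) ∧ q = (m, N.act a n)

/-- The tensor product `M ⊗_A N` of two `A`-sets. -/
def tensor (M N : ASet A) : ASet A where
  carrier := Quot (tensorRel M N)
  pt := Quot.mk _ (M.pt, N.pt)
  act a := Quot.lift (fun p => Quot.mk _ (M.act a p.1, p.2)) (by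
    rintro p q ⟨b, m, n, rfl, rfl⟩
    dsimp only
    rw [← M.act_mul, mul_comm a b, M.act_mul]
    exact Quot.sound ⟨b, M.act a m, n, rfl, rfl⟩)
  act_mul a b q := Quot.inductionOn q fun p => by
    show Quot.mk _ (M.act (a * b) p.1, p.2) = Quot.mk _ (M.act a (M.act b p.1), p.2)
    rw [M.act_mul]
  act_pt a := by
    show Quot.mk _ (M.act a M.pt, N.pt) = Quot.mk _ (M.pt, N.pt)
    rw [M.act_pt]
  zero_act q := Quot.inductionOn q fun p => by
    show Quot.mk _ (M.act 0 p.1, p.2) = Quot.mk _ (M.pt, N.pt)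
    rw [M.zero_act]
    exact Quot.sound ⟨0, M.pt, p.2, by rw [M.zero_act], by rw [N.zero_act]⟩
  one_act q := Quot.inductionOn q fun p => by
    show Quot.mk _ (M.act 1 p.1, p.2) = Quot.mk _ p
    rw [M.one_act]

/-- The product of a family of `A`-sets. -/
def pi {ι : Type u} (Ms : ι → ASet A) : ASet A where
  carrier := ∀ i, (Ms i).carrier
  pt := fun i => (Ms i).pt
  act a m := fun i => (Ms i).act a (m i)
  act_mul a b m := funext fun i => (Ms i).act_mul a b (m i)
  act_pt a := funext fun i => (Ms i).act_pt a
  zero_act m := funext fun i => (Ms i).zero_act (m i)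
  one_act m := funext fun i => (Ms i).one_act (m i)

/-- The linearization `M_ℤ` of an `A`-set: the free abelian group on `M ∖ {∗}`. -/
abbrev lin (M : ASet A) : Type u := {m : M.carrier // m ≠ M.pt} →₀ ℤ

end ASet

namespace ASetHom

attribute [local instance] Classical.propDecidable

/-- The linearization `f_ℤ : M_ℤ → N_ℤ` of a morphism of `A`-sets. -/
noncomputable def lin {M N : ASet A} (f : ASetHom M N) : M.lin →+ N.lin :=
  Finsupp.liftAddHom fun m =>
    if h : f.toFun m.1 = N.pt then 0 else Finsupp.singleAddHom ⟨f.toFun m.1, h⟩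

end ASetHom

namespace ASet

/-- The action of `a ∈ A` on `M`, as a morphism of `A`-sets. -/
def actHom (M : ASet A) (a : A) : ASetHom M M :=
  ⟨M.act a, M.act_pt a, fun b m => by
    rw [← M.act_mul, mul_comm a b, M.act_mul]⟩

/-- The linearization of the action of `a ∈ A` on `M_ℤ`. -/
noncomputable def actLin (M : ASet A) (a : A) : M.lin →+ M.lin := (M.actHom a).lin

/-- An `A`-set is finitely generated if it is a finite union of orbits `A.mᵢ`. -/
def FG (M : ASet A) : Prop :=
  ∃ s : Finset M.carrier, ∀ m : M.carrier, ∃ g ∈ s, ∃ a : A, m = M.act a g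

/-- A subset of an `A`-set is an `A`-subset if it contains the basepoint and is stable
under the action. -/
def IsSubASet (M : ASet A) (N : Set M.carrier) : Prop :=
  M.pt ∈ N ∧ ∀ a : A, ∀ m ∈ N, M.act a m ∈ N

/-- An `A`-subset is finitely generated. -/
def SubFG (M : ASet A) (N : Set M.carrier) : Prop :=
  ∃ s : Finset M.carrier, ↑s ⊆ N ∧ ∀ m ∈ N, ∃ g ∈ s, ∃ a : A, m = M.act a g

/-- An `A`-set is Noetherian if every `A`-subset is finitely generated. -/
def Noetherian (M : ASet A) : Prop :=
  ∀ N : Set M.carrier, M.IsSubASet N → M.SubFG N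

/-- `M_ℤ` is a finitely generated `A_ℤ`-module: there are finitely many elements whose
`A`-translates generate `M_ℤ` as an abelian group. -/
def linFG (M : ASet A) : Prop :=
  ∃ s : Finset M.lin,
    AddSubgroup.closure {y : M.lin | ∃ g ∈ s, ∃ a : A, y = M.actLin a g} = ⊤

end ASet

namespace ASetHom

/-- The kernel of a morphism of `A`-sets, as an `A`-set. -/
def kerASet {M N : ASet A} (f : ASetHom M N) : ASet A :=
  M.sub f.kerSet f.map_pt f.kerSet_stable

/-- The canonical inclusion `(ker f)_ℤ → M_ℤ`. -/
noncomputable def kerLinIncl {M N : ASet A} (f : ASetHom M N) :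
    (f.kerASet).lin →+ M.lin :=
  Finsupp.mapDomain.addMonoidHom fun x =>
    (⟨x.1.1, fun h => x.2 (Subtype.ext h)⟩ : {m : M.carrier // m ≠ M.pt})

/-- `f` is a kernel of `g` (via the concrete description of kernels of `A`-sets). -/
def IsKernelOf {M N P : ASet A} (f : ASetHom M N) (g : ASetHom N P) : Prop :=
  Function.Injective f.toFun ∧ Set.range f.toFun = g.kerSet

/-- `f` is a cokernel of `g` (via the concrete description `N ≅ M/im g`). -/
def IsCokernelOf {M N P : ASet A} (f : ASetHom M N) (g : ASetHom P M) : Prop :=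
  Function.Surjective f.toFun ∧
    ∀ m m', f.toFun m = f.toFun m' ↔
      (m = m' ∨ (m ∈ Set.range g.toFun ∧ m' ∈ Set.range g.toFun))

end ASetHom


/-! `f_ℤ` kills the basis vectors lying in `ker f` and sends any other basis vector `m` to `f m`,
so the image of `(ker f)_ℤ` is the span of the basis vectors in `ker f` and lies in `ker f_ℤ`.
If `f` is normal, the coefficient of `x` at `m ∉ ker f` is the coefficient of `f_ℤ x` at `f m`,
so `ker f_ℤ` is that span; if `m ≠ m'` have the same image `f m ≠ ∗`, then `m - m' ∈ ker f_ℤ`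
is not in it. -/

theorem Finsupp.range_mapDomain_of_injective {α β M : Type*} [AddCommMonoid M] {f : α → β}
    (hf : Function.Injective f) :
    Set.range (Finsupp.mapDomain f : (α →₀ M) → β →₀ M) = {l | ↑l.support ⊆ Set.range f} := by
  ext l
  constructor
  · rintro ⟨x, rfl⟩ b hb
    exact Finsupp.mem_range_of_mapDomain_ne_zero (Finsupp.mem_support_iff.mp hb)
  · intro hl
    exact ⟨_, Finsupp.mapDomain_comapDomain f hf l hl⟩

namespace ASetHom

variable {M N : ASet A}

def kerIncl (f : ASetHom M N) :
    {m : (f.kerASet).carrier // m ≠ (f.kerASet).pt} → {m : M.carrier // m ≠ M.pt} :=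
  fun x => ⟨x.1.1, fun h => x.2 (Subtype.ext h)⟩

theorem kerIncl_injective (f : ASetHom M N) : Function.Injective f.kerIncl := by
  intro x y h
  have hval := congrArg Subtype.val h
  exact Subtype.ext (Subtype.ext hval)

theorem range_kerIncl (f : ASetHom M N) :
    Set.range f.kerIncl = {m | f.toFun m.1 = N.pt} := by
  ext m
  refine ⟨?_, fun hm => ⟨⟨⟨m.1, hm⟩, fun h => m.2 (congrArg Subtype.val h)⟩, rfl⟩⟩
  rintro ⟨x, rfl⟩
  exact x.1.2

theorem kerLinIncl_eq_mapDomain (f : ASetHom M N) :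
    ⇑f.kerLinIncl = Finsupp.mapDomain f.kerIncl :=
  rfl

theorem kerLinIncl_injective (f : ASetHom M N) : Function.Injective f.kerLinIncl :=
  Finsupp.mapDomain_injective f.kerIncl_injective

theorem range_kerLinIncl (f : ASetHom M N) :
    Set.range f.kerLinIncl = {x | ∀ m ∈ x.support, f.toFun m.1 = N.pt} := by
  rw [kerLinIncl_eq_mapDomain, Finsupp.range_mapDomain_of_injective f.kerIncl_injective,
    range_kerIncl]
  rfl

theorem lin_single_of_mem_kerSet (f : ASetHom M N) {m : {m : M.carrier // m ≠ M.pt}}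
    (hm : f.toFun m.1 = N.pt) (n : ℤ) : f.lin (Finsupp.single m n) = 0 := by
  rw [ASetHom.lin, Finsupp.liftAddHom_apply_single, dif_pos hm]
  rfl

theorem lin_single_of_notMem_kerSet (f : ASetHom M N) {m : {m : M.carrier // m ≠ M.pt}}
    (hm : f.toFun m.1 ≠ N.pt) (n : ℤ) :
    f.lin (Finsupp.single m n) = Finsupp.single ⟨f.toFun m.1, hm⟩ n := by
  rw [ASetHom.lin, Finsupp.liftAddHom_apply_single, dif_neg hm]
  rfl

theorem lin_comp_kerLinIncl (f : ASetHom M N) : f.lin.comp f.kerLinIncl = 0 := by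
  refine Finsupp.addHom_ext fun x n => ?_
  rw [AddMonoidHom.comp_apply, kerLinIncl_eq_mapDomain, Finsupp.mapDomain_single]
  exact f.lin_single_of_mem_kerSet (m := f.kerIncl x) x.1.2 n

theorem IsNormal.lin_apply {f : ASetHom M N} (hf : f.IsNormal) (x : M.lin)
    {m₀ : {m : M.carrier // m ≠ M.pt}} (h : f.toFun m₀.1 ≠ N.pt) :
    f.lin x ⟨f.toFun m₀.1, h⟩ = x m₀ := by
  induction x using Finsupp.induction_linear with
  | zero => simp
  | add x y hx hy => simp [hx, hy]
  | single m n =>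
    by_cases hm : f.toFun m.1 = N.pt
    · have hne : m ≠ m₀ := fun he => h (he ▸ hm)
      rw [f.lin_single_of_mem_kerSet hm, Finsupp.single_eq_of_ne' hne]
      rfl
    · rw [f.lin_single_of_notMem_kerSet hm]
      by_cases he : m = m₀
      · subst he
        simp
      · have hfe : f.toFun m.1 ≠ f.toFun m₀.1 := fun hfe => he (Subtype.ext (hf _ _ hfe hm))
        rw [Finsupp.single_eq_of_ne' he,
          Finsupp.single_eq_of_ne' (fun h' => hfe (congrArg Subtype.val h'))]

theorem IsNormal.mem_kerSet_of_lin_eq_zero {f : ASetHom M N} (hf : f.IsNormal) {x : M.lin}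
    (hx : f.lin x = 0) : ∀ m ∈ x.support, f.toFun m.1 = N.pt := by
  intro m hm
  by_contra h
  rw [Finsupp.mem_support_iff, ← hf.lin_apply x h, hx] at hm
  exact hm rfl

theorem exists_lin_eq_zero_of_not_isNormal {f : ASetHom M N} (hf : ¬ f.IsNormal) :
    ∃ x : M.lin, f.lin x = 0 ∧ ∃ m ∈ x.support, f.toFun m.1 ≠ N.pt := by
  simp only [IsNormal, not_forall] at hf
  obtain ⟨m, m', hmm', hm, hne⟩ := hf
  have hmpt : m ≠ M.pt := fun h => hm (h ▸ f.map_pt)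
  have hm'pt : m' ≠ M.pt := fun h => hm (hmm'.trans (h ▸ f.map_pt))
  have hm' : f.toFun m' ≠ N.pt := hmm' ▸ hm
  refine ⟨Finsupp.single ⟨m, hmpt⟩ 1 - Finsupp.single ⟨m', hm'pt⟩ 1, ?_, ⟨m, hmpt⟩, ?_, hm⟩
  · rw [map_sub, f.lin_single_of_notMem_kerSet hm, f.lin_single_of_notMem_kerSet hm', sub_eq_zero]
    congr 2
  · have hne' : (⟨m', hm'pt⟩ : {m : M.carrier // m ≠ M.pt}) ≠ ⟨m, hmpt⟩ :=
      fun h => hne (congrArg Subtype.val h).symm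
    simp [Finsupp.single_eq_of_ne' hne']

end ASetHom

/-- The canonical inclusion `(ker f)_ℤ → ker f_ℤ` is an isomorphism if and only if `f`
is normal. -/
theorem kerLin_iso_iff_normal {A : Type u} [CommMonoidWithZero A] {M N : ASet A}
    (f : ASetHom M N) :
    (Function.Injective f.kerLinIncl ∧
      Set.range f.kerLinIncl = {x : ASet.lin M | f.lin x = 0}) ↔ f.IsNormal := by
  rw [f.range_kerLinIncl]
  constructor
  · rintro ⟨-, hrange⟩
    by_contra hf
    obtain ⟨x, hx, m, hm, hfm⟩ := ASetHom.exists_lin_eq_zero_of_not_isNormal hf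
    exact hfm (((Set.ext_iff.mp hrange x).mpr hx) m hm)
  · intro hf
    refine ⟨f.kerLinIncl_injective, Set.ext fun x => ⟨fun hx => ?_, hf.mem_kerSet_of_lin_eq_zero⟩⟩
    obtain ⟨y, rfl⟩ : x ∈ Set.range f.kerLinIncl := f.range_kerLinIncl ▸ hx
    exact DFunLike.congr_fun f.lin_comp_kerLinIncl y
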